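/- If G is a finite simple graph of order n and size m without isolated vertices, then the restrained double domination number satisfies γ_{2r}(G) ≥ (5n − 2m)/4. -/

import Mathlib

open Finset

/-- A set `S` of vertices is a `(k,k',k'')`-dominating set if every vertex in `S` has at
least `k` neighbors in `S`, and every vertex not in `S` has at least `k'` neighbors in `S`
and at least `k''` neighbors outside `S`. -/
def SimpleGraph.IsKkkDomSet {V : Type*} [Fintype V] [DecidableEq V] (G : SimpleGraph V)
    [DecidableRel G.Adj] (k k' k'' : ℕ) (S : Finset V) : Prop :=
  (∀ v ∈ S, k ≤ (G.neighborFinset v ∩ S).card) ∧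
  (∀ v ∉ S, k' ≤ (G.neighborFinset v ∩ S).card ∧ k'' ≤ (G.neighborFinset v \ S).card)

/-- The `(k,k',k'')`-domination number: the minimum cardinality of a
`(k,k',k'')`-dominating set. -/
noncomputable def SimpleGraph.kkkDomNum {V : Type*} [Fintype V] [DecidableEq V]
    (G : SimpleGraph V) [DecidableRel G.Adj] (k k' k'' : ℕ) : ℕ :=
  sInf {n | ∃ S : Finset V, G.IsKkkDomSet k k' k'' S ∧ S.card = n}

/-!
Counting degrees of a `(k,k',k'')`-dominating set `S` with complement `T`: the degrees in `S`
contribute at least `k * |S| + e(S,T)`, those in `T` at least `e(S,T) + k'' * |T|`, and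
`e(S,T) ≥ k' * |T|`. Hence `2m ≥ k * |S| + (2k' + k'') * |T|`, which for `(1,2,1)` and
`|T| = n - |S|` reads `2m ≥ 5n - 4|S|`.
-/

namespace SimpleGraph

variable {V : Type*} [Fintype V] [DecidableEq V] (G : SimpleGraph V) [DecidableRel G.Adj]

theorem sum_card_neighborFinset_inter_comm (s t : Finset V) :
    ∑ v ∈ s, #(G.neighborFinset v ∩ t) = ∑ v ∈ t, #(G.neighborFinset v ∩ s) := by
  have hAbove : ∀ v u, G.neighborFinset v ∩ u = u.bipartiteAbove G.Adj v := fun v u => by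
    ext w; simp [bipartiteAbove, and_comm]
  have hBelow : ∀ v u, G.neighborFinset v ∩ u = u.bipartiteBelow G.Adj v := fun v u => by
    ext w; simp [bipartiteBelow, G.adj_comm, and_comm]
  rw [sum_congr rfl fun v _ => congrArg card (hAbove v t),
    sum_congr rfl fun v _ => congrArg card (hBelow v s)]
  exact sum_card_bipartiteAbove_eq_sum_card_bipartiteBelow _

theorem degree_eq_card_inter_add_card_sdiff (v : V) (s : Finset V) :
    G.degree v = #(G.neighborFinset v ∩ s) + #(G.neighborFinset v \ s) :=
  (card_inter_add_card_sdiff _ _).symm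

variable {G}

theorem isKkkDomSet_univ {k k' k'' : ℕ} (h : ∀ v, k ≤ G.degree v) :
    G.IsKkkDomSet k k' k'' univ :=
  ⟨fun v _ => by simpa using h v, fun v hv => absurd (mem_univ v) hv⟩

theorem exists_isKkkDomSet_card_eq_kkkDomNum {k k' k'' : ℕ}
    (h : ∃ S, G.IsKkkDomSet k k' k'' S) :
    ∃ S, G.IsKkkDomSet k k' k'' S ∧ #S = G.kkkDomNum k k' k'' :=
  let ⟨S, hS⟩ := h
  Nat.sInf_mem (s := {n | ∃ S, G.IsKkkDomSet k k' k'' S ∧ #S = n}) ⟨_, S, hS, rfl⟩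

theorem IsKkkDomSet.mul_card_add_mul_card_compl_le {k k' k'' : ℕ} {S : Finset V}
    (hS : G.IsKkkDomSet k k' k'' S) :
    k * #S + (2 * k' + k'') * #Sᶜ ≤ 2 * #G.edgeFinset := by
  obtain ⟨hin, hout⟩ := hS
  set e := ∑ v ∈ S, #(G.neighborFinset v \ S)
  have he : e = ∑ v ∈ Sᶜ, #(G.neighborFinset v ∩ S) := by
    simp only [e, sdiff_eq_inter_compl]
    exact G.sum_card_neighborFinset_inter_comm S Sᶜ
  have hinside : k * #S ≤ ∑ v ∈ S, #(G.neighborFinset v ∩ S) := by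
    simpa [mul_comm] using card_nsmul_le_sum S _ k hin
  have hcrossing : k' * #Sᶜ ≤ e := by
    simpa [he, mul_comm] using
      card_nsmul_le_sum Sᶜ _ k' fun v hv => (hout v (mem_compl.1 hv)).1
  have houtside : k'' * #Sᶜ ≤ ∑ v ∈ Sᶜ, #(G.neighborFinset v \ S) := by
    simpa [mul_comm] using
      card_nsmul_le_sum Sᶜ _ k'' fun v hv => (hout v (mem_compl.1 hv)).2
  calc k * #S + (2 * k' + k'') * #Sᶜ
      ≤ (∑ v ∈ S, #(G.neighborFinset v ∩ S) + ∑ v ∈ Sᶜ, #(G.neighborFinset v ∩ S)) +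
          (e + ∑ v ∈ Sᶜ, #(G.neighborFinset v \ S)) := by
        rw [← he, add_mul, mul_assoc]; omega
    _ = ∑ v, G.degree v := by
        rw [sum_add_sum_compl, sum_add_sum_compl, ← sum_add_distrib]
        simp only [G.degree_eq_card_inter_add_card_sdiff _ S]
    _ = 2 * #G.edgeFinset := G.sum_degrees_eq_twice_card_edges

end SimpleGraph

/-- If G has no isolated vertices, then γ_{2r}(G) = γ_{(1,2,1)}(G) ≥ (5n − 2m)/4. -/
theorem stmt_18 {V : Type*} [Fintype V] [DecidableEq V] (G : SimpleGraph V)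
    [DecidableRel G.Adj] (h : ∀ v : V, 0 < G.degree v) :
    (5 * (Fintype.card V : ℝ) - 2 * G.edgeFinset.card) / 4 ≤ G.kkkDomNum 1 2 1 := by
  obtain ⟨S, hS, hcard⟩ := G.exists_isKkkDomSet_card_eq_kkkDomNum ⟨univ, G.isKkkDomSet_univ h⟩
  have hbound : (#S : ℝ) + 5 * #Sᶜ ≤ 2 * #G.edgeFinset := by
    exact_mod_cast (by simpa using hS.mul_card_add_mul_card_compl_le (k := 1) (k' := 2) (k'' := 1))
  have hsplit : (#S : ℝ) + #Sᶜ = Fintype.card V := by exact_mod_cast card_add_card_compl S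
  rw [← hcard, div_le_iff₀ four_pos]
  linarith
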